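/- arXiv:0911.4732 — 4 statements merged into one kernel-verified Lean document; each statement's English description precedes it below -/
import Mathlib

section
/- Let G be a forest that is bipartite with parts U and W, and let A be its |U|×|W| bipartite adjacency matrix over F_2. Then the rank of A over F_2 equals the size of a maximum matching in G. -/
/-!
Over any field, rank is at most term rank: a set of `rank A` linearly independent rows satisfies
Hall's condition on the supports of its rows, so it has a transversal of nonzero entries, which for
`bipMat E` is a matching of size `rank`.

Conversely, in a forest the rows of the vertices covered by a matching `M` are independent over
`F_2`. A nonempty set `R` of them with zero sum is one where every neighbour of `R` sees `R` an even
number of times, hence at least twice, so the edges at `R` number at least `2 |N(R)|`. Acyclicity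
bounds them by `|R| + |N(R)| - 1`, so `|N(R)| < |R|`, while `M` injects `R` into `N(R)`.
-/

/-- The bipartite adjacency matrix over `F_2` of the edge set `S ⊆ U × W`. -/
def bipMat {U W : Type*} [DecidableEq U] [DecidableEq W] (S : Finset (U × W)) :
    Matrix U W (ZMod 2) :=
  Matrix.of fun u w => if (u, w) ∈ S then 1 else 0

/-- The simple graph on `U ⊕ W` determined by the bipartite edge set `E ⊆ U × W`. -/
def bipGraph {U W : Type*} (E : Finset (U × W)) : SimpleGraph (U ⊕ W) :=
  SimpleGraph.fromRel fun x y => ∃ p ∈ E, x = Sum.inl p.1 ∧ y = Sum.inr p.2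

open Finset SimpleGraph

namespace SimpleGraph

variable {V : Type*} {G : SimpleGraph V}

lemma IsAcyclic.ncard_edgeSet_lt [Finite V] [Nonempty V] (hG : G.IsAcyclic) :
    G.edgeSet.ncard < Nat.card V := by
  obtain ⟨T, hGT, -, hT⟩ := connected_top.exists_isTree_le_of_le_of_isAcyclic le_top hG
  have hle : G.edgeSet.ncard ≤ T.edgeSet.ncard :=
    Set.ncard_le_ncard (edgeSet_subset_edgeSet.2 hGT) (Set.toFinite _)
  have htree := (isTree_iff_connected_and_card.1 hT).2
  rw [Nat.card_coe_set_eq] at htree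
  omega

lemma IsAcyclic.ncard_edgeSet_lt_card {s : Finset V} (hG : G.IsAcyclic) (hs : s.Nonempty)
    (hsupp : ∀ ⦃x y⦄, G.Adj x y → x ∈ s) : G.edgeSet.ncard < #s := by
  have : Nonempty s := hs.to_subtype
  have hmap : (G.induce (s : Set V)).map (Function.Embedding.subtype _) = G := by
    ext x y
    rw [map_adj]
    exact ⟨by rintro ⟨x, y, h, rfl, rfl⟩; exact h,
      fun h => ⟨⟨x, hsupp h⟩, ⟨y, hsupp h.symm⟩, h, rfl, rfl⟩⟩
  calc G.edgeSet.ncard = (G.induce (s : Set V)).edgeSet.ncard := by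
        conv_lhs => rw [← hmap]
        rw [edgeSet_map, Set.ncard_image_of_injective _ (Function.Embedding.injective _)]
    _ < Nat.card s := (hG.induce _).ncard_edgeSet_lt
    _ = #s := Nat.card_eq_finsetCard s

end SimpleGraph

lemma linearIndependent_zmod_two_iff {ι V : Type*} [AddCommGroup V] [Module (ZMod 2) V]
    {v : ι → V} :
    LinearIndependent (ZMod 2) v ↔ ∀ s : Finset ι, ∑ i ∈ s, v i = 0 → s = ∅ := by
  classical
  rw [linearIndependent_iff']
  constructor
  · intro h s hs
    by_contra hne
    obtain ⟨i, hi⟩ := nonempty_iff_ne_empty.2 hne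
    exact one_ne_zero (h s 1 (by simpa using hs) i hi)
  · intro h s g hg i hi
    by_contra hgi
    have hsum : ∑ j ∈ s with g j ≠ 0, v j = ∑ j ∈ s, g j • v j := by
      rw [sum_filter]
      refine sum_congr rfl fun j _ => ?_
      have hZ2 : ∀ x : ZMod 2, x = 0 ∨ x = 1 := by decide
      rcases hZ2 (g j) with h0 | h1 <;> simp [*]
    have hempty := h _ (hsum.trans hg)
    exact (nonempty_iff_ne_empty.1 ⟨i, mem_filter.2 ⟨hi, hgi⟩⟩) hempty

namespace Matrix

variable {K m n : Type*} [Field K] [Fintype n]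

theorem exists_injective_ne_zero_of_linearIndependent_row {A : Matrix m n K}
    (hA : LinearIndependent K A.row) :
    ∃ f : m → n, Function.Injective f ∧ ∀ i, A i (f i) ≠ 0 := by
  classical
  obtain ⟨f, hf, hmem⟩ :=
    (all_card_le_biUnion_card_iff_exists_injective fun i => {j | A i j ≠ 0}).1 fun s => by
      let B : Matrix s n K := A.submatrix Subtype.val id
      have hsupp : Function.support Bᵀ.row ⊆ s.biUnion fun i => {j | A i j ≠ 0} := by
        intro j hj
        by_contra hnot
        refine hj (funext fun i => ?_)
        by_contra hij
        exact hnot (mem_biUnion.2 ⟨i, i.2, mem_filter.2 ⟨mem_univ _, hij⟩⟩)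
      have hB : LinearIndependent K B.row := hA.comp _ Subtype.val_injective
      calc #s = B.rank := by rw [hB.rank_matrix, Fintype.card_coe]
        _ = Bᵀ.rank := B.rank_transpose.symm
        _ ≤ _ := Bᵀ.rank_le_card_of_support_subset _ hsupp
  exact ⟨f, hf, fun i => (mem_filter.1 (hmem i)).2⟩

theorem exists_linearIndependent_row_card_eq_rank [Finite m] (A : Matrix m n K) :
    ∃ s : Finset m, #s = A.rank ∧ LinearIndependent K fun i : s => A.row i := by
  obtain ⟨b, -, -, hspan, hli⟩ :=
    exists_linearIndepOn_extension (linearIndepOn_empty K A.row) (Set.empty_subset Set.univ)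
  lift b to Finset m using b.toFinite
  refine ⟨b, ?_, hli⟩
  have hspan_eq : Submodule.span K (Set.range A.row) = Submodule.span K (A.row '' b) :=
    le_antisymm (Submodule.span_le.2 (by simpa using hspan))
      (Submodule.span_mono (Set.image_subset_range _ _))
  rw [rank_eq_finrank_span_row, hspan_eq, Set.image_eq_range, finrank_span_eq_card hli]
  simp

theorem exists_injective_ne_zero_card_eq_rank [Finite m] (A : Matrix m n K) :
    ∃ s : Finset m, ∃ f : s → n,
      #s = A.rank ∧ Function.Injective f ∧ ∀ i : s, A i (f i) ≠ 0 := by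
  obtain ⟨s, hs, hli⟩ := A.exists_linearIndependent_row_card_eq_rank
  obtain ⟨f, hf, hne⟩ :=
    exists_injective_ne_zero_of_linearIndependent_row (A := A.submatrix Subtype.val id) hli
  exact ⟨s, f, hs, hf, hne⟩

end Matrix

section

variable {U W : Type*}

lemma bipGraph_mono {E F : Finset (U × W)} (h : E ⊆ F) : bipGraph E ≤ bipGraph F := by
  intro x y
  simp only [bipGraph, fromRel_adj]
  rintro ⟨hne, ⟨p, hp, hxy⟩ | ⟨p, hp, hxy⟩⟩
  · exact ⟨hne, .inl ⟨p, h hp, hxy⟩⟩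
  · exact ⟨hne, .inr ⟨p, h hp, hxy⟩⟩

lemma edgeSet_bipGraph (E : Finset (U × W)) :
    (bipGraph E).edgeSet = (fun p : U × W => s(Sum.inl p.1, Sum.inr p.2)) '' E := by
  ext ⟨x, y⟩
  simp only [bipGraph, mem_edgeSet, fromRel_adj, Set.mem_image, mem_coe, Sym2.eq_iff]
  aesop

lemma ncard_edgeSet_bipGraph (E : Finset (U × W)) : (bipGraph E).edgeSet.ncard = #E := by
  rw [edgeSet_bipGraph, Set.ncard_image_of_injective _ ?_, Set.ncard_coe_finset]
  intro p q h
  simpa [Sym2.eq_iff, Prod.ext_iff] using h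

lemma mem_disjSum_of_bipGraph_adj {E : Finset (U × W)} {R : Finset U} {N : Finset W}
    (hsub : ∀ p ∈ E, p.1 ∈ R ∧ p.2 ∈ N) {x y : U ⊕ W} (h : (bipGraph E).Adj x y) :
    x ∈ R.disjSum N := by
  simp only [bipGraph, fromRel_adj] at h
  obtain ⟨-, ⟨p, hp, rfl, -⟩ | ⟨p, hp, -, rfl⟩⟩ := h <;> simp [hsub p hp]

lemma card_lt_card_add_card_of_isAcyclic_bipGraph {E : Finset (U × W)} {R : Finset U}
    {N : Finset W} (hsub : ∀ p ∈ E, p.1 ∈ R ∧ p.2 ∈ N) (hR : R.Nonempty)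
    (hacyc : (bipGraph E).IsAcyclic) : #E < #R + #N := by
  rw [← ncard_edgeSet_bipGraph, ← card_disjSum]
  obtain ⟨u, hu⟩ := hR
  exact hacyc.ncard_edgeSet_lt_card ⟨.inl u, by simpa using hu⟩
    fun _ _ => mem_disjSum_of_bipGraph_adj hsub

def IsBipMatching (M : Finset (U × W)) : Prop :=
  ∀ e ∈ M, ∀ f ∈ M, e ≠ f → e.1 ≠ f.1 ∧ e.2 ≠ f.2

lemma IsBipMatching.injOn_fst {M : Finset (U × W)} (hM : IsBipMatching M) :
    Set.InjOn Prod.fst (M : Set (U × W)) :=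
  fun e he f hf h => by_contra fun hne => (hM e he f hf hne).1 h

lemma IsBipMatching.injOn_snd {M : Finset (U × W)} (hM : IsBipMatching M) :
    Set.InjOn Prod.snd (M : Set (U × W)) :=
  fun e he f hf h => by_contra fun hne => (hM e he f hf hne).2 h

variable [DecidableEq U] [DecidableEq W]

def bipNeighbors (E : Finset (U × W)) (R : Finset U) : Finset W :=
  {p ∈ E | p.1 ∈ R}.image Prod.snd

lemma card_le_card_bipNeighbors {E M : Finset (U × W)} (hME : M ⊆ E) (hM : IsBipMatching M)
    {R : Finset U} (hR : R ⊆ M.image Prod.fst) : #R ≤ #(bipNeighbors E R) := by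
  set M' := {p ∈ M | p.1 ∈ R}
  have hM' : M' ⊆ M := filter_subset _ _
  have hR' : M'.image Prod.fst = R := by
    ext u
    constructor
    · intro hu
      obtain ⟨p, hp, rfl⟩ := mem_image.1 hu
      exact (mem_filter.1 hp).2
    · intro hu
      obtain ⟨p, hp, rfl⟩ := mem_image.1 (hR hu)
      exact mem_image_of_mem _ (mem_filter.2 ⟨hp, hu⟩)
  calc #R = #M' := by rw [← hR', card_image_of_injOn (hM.injOn_fst.mono (by simpa using hM'))]
    _ = #(M'.image Prod.snd) := (card_image_of_injOn (hM.injOn_snd.mono (by simpa using hM'))).symm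
    _ ≤ #(bipNeighbors E R) := card_le_card (image_subset_image (filter_subset_filter _ hME))

lemma card_bipNeighbors_lt_of_even {E : Finset (U × W)} (hE : (bipGraph E).IsAcyclic)
    {R : Finset U} (hR : R.Nonempty) (heven : ∀ w, Even #{u ∈ R | (u, w) ∈ E}) :
    #(bipNeighbors E R) < #R := by
  set H := {p ∈ E | p.1 ∈ R}
  set N := bipNeighbors E R
  have hedges : #H < #R + #N :=
    card_lt_card_add_card_of_isAcyclic_bipGraph
      (fun p hp => ⟨(mem_filter.1 hp).2, mem_image_of_mem _ hp⟩) hR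
      (hE.anti (bipGraph_mono (filter_subset _ _)))
  have hfiber : ∀ w ∈ N, 2 ≤ #{p ∈ H | p.2 = w} := by
    intro w hw
    have hcard : #{p ∈ H | p.2 = w} = #{u ∈ R | (u, w) ∈ E} := by
      refine card_nbij' Prod.fst (fun u => (u, w)) ?_ ?_ ?_ ?_ <;> intro p hp <;>
        simp only [H, coe_filter, mem_filter, Set.mem_ofPred_eq] at hp ⊢
      · exact ⟨hp.1.2, hp.2 ▸ hp.1.1⟩
      · exact ⟨⟨hp.2, hp.1⟩, trivial⟩
      · exact Prod.ext rfl hp.2.symm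
    have hpos : 0 < #{p ∈ H | p.2 = w} := by
      obtain ⟨p, hp, rfl⟩ := mem_image.1 hw
      exact card_pos.2 ⟨p, mem_filter.2 ⟨hp, rfl⟩⟩
    obtain ⟨k, hk⟩ := heven w
    omega
  have hdouble : 2 * #N ≤ #H := by
    calc 2 * #N = ∑ _w ∈ N, 2 := by rw [sum_const, smul_eq_mul, mul_comm]
      _ ≤ ∑ w ∈ N, #{p ∈ H | p.2 = w} := sum_le_sum hfiber
      _ = #H := (card_eq_sum_card_image Prod.snd H).symm
  omega

lemma sum_bipMat_apply (E : Finset (U × W)) (R : Finset U) (w : W) :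
    (∑ u ∈ R, (bipMat E).row u) w = #{u ∈ R | (u, w) ∈ E} := by
  simp [bipMat, Finset.sum_apply]

lemma linearIndependent_bipMat_rows_of_isBipMatching {E M : Finset (U × W)}
    (hE : (bipGraph E).IsAcyclic) (hME : M ⊆ E) (hM : IsBipMatching M) :
    LinearIndependent (ZMod 2) fun u : M.image Prod.fst => (bipMat E).row u := by
  rw [linearIndependent_zmod_two_iff]
  intro s hs
  by_contra hne
  set R := s.map (Function.Embedding.subtype _) with hRdef
  have hR : R ⊆ M.image Prod.fst := by
    intro u hu
    obtain ⟨u, -, rfl⟩ := mem_map.1 hu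
    exact u.2
  have heven : ∀ w, Even #{u ∈ R | (u, w) ∈ E} := by
    intro w
    rw [← ZMod.natCast_eq_zero_iff_even, ← sum_bipMat_apply, hRdef, sum_map]
    exact congrFun hs w
  exact (card_le_card_bipNeighbors hME hM hR).not_gt
    (card_bipNeighbors_lt_of_even hE (map_nonempty.2 (nonempty_iff_ne_empty.2 hne)) heven)

lemma card_le_rank_bipMat_of_isBipMatching [Fintype W] {E M : Finset (U × W)}
    (hE : (bipGraph E).IsAcyclic) (hME : M ⊆ E) (hM : IsBipMatching M) :
    #M ≤ (bipMat E).rank :=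
  calc #M = #(M.image Prod.fst) := (card_image_of_injOn hM.injOn_fst).symm
    _ = ((bipMat E).submatrix (Subtype.val : M.image Prod.fst → U) id).rank := by
      have hli : LinearIndependent (ZMod 2)
          ((bipMat E).submatrix (Subtype.val : M.image Prod.fst → U) id).row :=
        linearIndependent_bipMat_rows_of_isBipMatching hE hME hM
      rw [hli.rank_matrix, Fintype.card_coe]
    _ ≤ (bipMat E).rank := Matrix.rank_submatrix_le _ _ _

lemma exists_isBipMatching_card_eq_rank [Finite U] [Fintype W] (E : Finset (U × W)) :
    ∃ M ⊆ E, IsBipMatching M ∧ #M = (bipMat E).rank := by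
  obtain ⟨s, f, hs, hf, hne⟩ := (bipMat E).exists_injective_ne_zero_card_eq_rank
  let g : s → U × W := fun i => (i, f i)
  have hg : Function.Injective g := fun i j h => Subtype.ext (congrArg Prod.fst h)
  refine ⟨univ.image g, ?_, ?_, ?_⟩
  · intro p hp
    obtain ⟨i, -, rfl⟩ := mem_image.1 hp
    by_contra h
    exact hne i (by simp [bipMat, g, h])
  · intro p hp q hq hpq
    obtain ⟨i, -, rfl⟩ := mem_image.1 hp
    obtain ⟨j, -, rfl⟩ := mem_image.1 hq
    have hij : i ≠ j := fun h => hpq (h ▸ rfl)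
    exact ⟨fun h => hij (Subtype.ext h), fun h => hij (hf h)⟩
  · rw [card_image_of_injective _ hg, card_univ, Fintype.card_coe, hs]

end

/-- Let `G` be a forest with parts `U`, `W` and `|U|×|W|` bipartite adjacency matrix `A`
over `F_2`.  Then the rank of `A` over `F_2` equals the size of a maximum matching of `G`:
there is a matching of size `rk_2(A)`, and every matching has size at most `rk_2(A)`. -/
theorem rank_bipMat_eq_maxMatching_of_forest {U W : Type*} [Fintype U] [Fintype W]
    [DecidableEq U] [DecidableEq W] (E : Finset (U × W))
    (hforest : (bipGraph E).IsAcyclic) :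
    (∃ M ⊆ E, (∀ e ∈ M, ∀ f ∈ M, e ≠ f → e.1 ≠ f.1 ∧ e.2 ≠ f.2) ∧
        M.card = (bipMat E).rank)
    ∧ ∀ M ⊆ E, (∀ e ∈ M, ∀ f ∈ M, e ≠ f → e.1 ≠ f.1 ∧ e.2 ≠ f.2) →
        M.card ≤ (bipMat E).rank :=
  ⟨exists_isBipMatching_card_eq_rank E,
    fun _ hME hM => card_le_rank_bipMat_of_isBipMatching hforest hME hM⟩
end

section
/- Let G = (U ∪ W, E) be a bipartite graph, and for an assignment σ: U ∪ W → {0,1} let w(σ) be the number of edges both of whose endpoints get label 1. Then for every real η, Σ_σ (1+η)^{w(σ)} (1−η)^{|E|−w(σ)} = 2^{|U|+|W|} · Σ_{S ⊆ E} (1/2)^{rk_2(S)} (−η)^{|S|}, where rk_2(S) is the F_2-rank of the bipartite adjacency matrix of (U ∪ W, S). -/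
open Finset Matrix

theorem Finset.pow_card_filter_mul_pow_card_sub {ι M : Type*} [CommMonoid M] (s : Finset ι)
    (p : ι → Prop) [DecidablePred p] (a b : M) :
    a ^ #(s.filter p) * b ^ (#s - #(s.filter p)) = ∏ i ∈ s, if p i then a else b := by
  rw [prod_ite, prod_const, prod_const, ← card_filter_add_card_filter_not (s := s) p,
    Nat.add_sub_cancel_left]

theorem Matrix.natCard_ker_mulVecLin {K m n : Type*} [Field K] [Finite K] [Fintype n]
    (A : Matrix m n K) :
    Nat.card (LinearMap.ker A.mulVecLin) = Nat.card K ^ (Fintype.card n - A.rank) := by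
  have rank_nullity := LinearMap.finrank_range_add_finrank_ker A.mulVecLin
  rw [Module.finrank_fintype_fun_eq_card] at rank_nullity
  rw [Module.natCard_eq_pow_finrank (K := K), ← rank_nullity, Matrix.rank,
    Nat.add_sub_cancel_left]

theorem AddChar.map_sum_eq_prod {ι A M : Type*} [AddCommMonoid A] [CommMonoid M]
    (ψ : AddChar A M) (s : Finset ι) (f : ι → A) : ψ (∑ i ∈ s, f i) = ∏ i ∈ s, ψ (f i) :=
  map_prod ψ.toMonoidHom (fun i => Multiplicative.ofAdd (f i)) s

section CharacterSums

variable {K R n : Type*} [Field K] [Fintype K] [DecidableEq K] [CommSemiring R] [IsDomain R]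
  [Fintype n] [DecidableEq n] {ψ : AddChar K R}

theorem AddChar.sum_dotProduct_eq_ite (hψ : ψ ≠ 0) (v : n → K) :
    ∑ x : n → K, ψ (x ⬝ᵥ v) = if v = 0 then (Fintype.card K : R) ^ Fintype.card n else 0 := by
  split_ifs with hv
  · simp [hv]
  obtain ⟨i, hi⟩ := Function.ne_iff.mp hv
  obtain ⟨a, ha⟩ := AddChar.ne_zero_iff.mp hψ
  let χ := ψ.compAddMonoidHom ((dotProductBilin K K).flip v).toAddMonoidHom
  have hχ : χ ≠ 0 := AddChar.ne_zero_iff.mpr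
    ⟨Pi.single i (a / v i), by simpa [χ, single_dotProduct, div_mul_cancel₀ a hi] using ha⟩
  simpa [χ, hχ] using χ.sum_eq_ite

theorem AddChar.sum_sum_dotProduct_mulVec {m : Type*} [Fintype m] [DecidableEq m] (hψ : ψ ≠ 0)
    (A : Matrix m n K) :
    ∑ x : m → K, ∑ y : n → K, ψ (x ⬝ᵥ A *ᵥ y) =
      (Fintype.card K : R) ^ (Fintype.card m + (Fintype.card n - A.rank)) := by
  have card_ker : #{y | A *ᵥ y = 0} = Nat.card (LinearMap.ker A.mulVecLin) := by
    rw [← Fintype.card_subtype, ← Nat.card_eq_fintype_card]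
    rfl
  rw [sum_comm]
  simp_rw [ψ.sum_dotProduct_eq_ite hψ, sum_ite, sum_const_zero, add_zero, sum_const, nsmul_eq_mul,
    card_ker, natCard_ker_mulVecLin, Nat.card_eq_fintype_card, pow_add]
  push_cast
  ring

end CharacterSums

theorem dotProduct_bipMat_mulVec {U W : Type*} [Fintype U] [Fintype W] [DecidableEq U]
    [DecidableEq W] (S : Finset (U × W)) (x : U → ZMod 2) (y : W → ZMod 2) :
    x ⬝ᵥ bipMat S *ᵥ y = ∑ e ∈ S, x e.1 * y e.2 := by
  simp only [dotProduct, mulVec, bipMat, of_apply, mul_sum, ite_mul, mul_ite, one_mul, zero_mul,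
    mul_zero]
  rw [← Fintype.sum_prod_type' (f := fun u w => if (u, w) ∈ S then x u * y w else 0),
    sum_ite_mem, univ_inter]

noncomputable def parityChar : AddChar (ZMod 2) ℝ :=
  AddChar.zmodChar 2 (by norm_num : (-1 : ℝ) ^ 2 = 1)

theorem parityChar_ne_zero : parityChar ≠ 0 :=
  AddChar.ne_zero_iff.mpr ⟨1, by rw [parityChar, AddChar.zmodChar_apply, ZMod.val_one]; norm_num⟩

-- `ZMod 2` is definitionally `Fin 2`.
def boolEquivZModTwo : Bool ≃ ZMod 2 := finTwoEquiv.symm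

theorem parityChar_boolEquivZModTwo_mul (a b : Bool) :
    parityChar (boolEquivZModTwo a * boolEquivZModTwo b) =
      if a = true ∧ b = true then -1 else 1 := by
  have val_mul : (boolEquivZModTwo a * boolEquivZModTwo b).val =
      if a = true ∧ b = true then 1 else 0 := by
    cases a <;> cases b <;> decide
  rw [parityChar, AddChar.zmodChar_apply, val_mul]
  split_ifs <;> norm_num

theorem sum_labellings_prod_sign_eq {U W : Type*} [Fintype U] [Fintype W] [DecidableEq U]
    [DecidableEq W] (S : Finset (U × W)) :
    ∑ σ : U ⊕ W → Bool, ∏ e ∈ S,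
        (if σ (.inl e.1) = true ∧ σ (.inr e.2) = true then (-1 : ℝ) else 1) =
      2 ^ (Fintype.card U + Fintype.card W) * (1 / 2 : ℝ) ^ (bipMat S).rank := by
  let labels : (U ⊕ W → Bool) ≃ (U → ZMod 2) × (W → ZMod 2) :=
    (Equiv.arrowCongr (.refl _) boolEquivZModTwo).trans (Equiv.sumArrowEquivProdArrow U W _)
  obtain ⟨k, hk⟩ := Nat.exists_eq_add_of_le (rank_le_card_width (bipMat S))
  calc _ = ∑ p : (U → ZMod 2) × (W → ZMod 2), parityChar (p.1 ⬝ᵥ bipMat S *ᵥ p.2) := by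
        refine Fintype.sum_equiv labels _ _ fun σ => ?_
        rw [dotProduct_bipMat_mulVec, AddChar.map_sum_eq_prod]
        exact prod_congr rfl fun e _ => (parityChar_boolEquivZModTwo_mul _ _).symm
    _ = _ := by
        rw [Fintype.sum_prod_type, parityChar.sum_sum_dotProduct_mulVec parityChar_ne_zero, hk,
          ZMod.card, Nat.add_sub_cancel_left, one_div, inv_pow]
        field_simp
        ring

/-- For a bipartite graph `G = (U ∪ W, E)` and any real `η`:
`Σ_σ (1+η)^{w(σ)} (1−η)^{|E|−w(σ)} = 2^{|U|+|W|} Σ_{S ⊆ E} (1/2)^{rk_2(S)} (−η)^{|S|}`,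
where `w(σ)` is the number of edges both of whose endpoints get label `1` and `rk_2(S)` is
the `F_2`-rank of the bipartite adjacency matrix of `(U ∪ W, S)`. -/
theorem pbis_eq_rank_sum {U W : Type*} [Fintype U] [Fintype W]
    [DecidableEq U] [DecidableEq W] (E : Finset (U × W)) (η : ℝ) :
    ∑ σ : U ⊕ W → Bool,
        (1 + η) ^ (E.filter fun p => σ (Sum.inl p.1) = true ∧ σ (Sum.inr p.2) = true).card
          * (1 - η) ^ (E.card -
            (E.filter fun p => σ (Sum.inl p.1) = true ∧ σ (Sum.inr p.2) = true).card)
      = 2 ^ (Fintype.card U + Fintype.card W) *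
          ∑ S ∈ E.powerset, (1 / 2 : ℝ) ^ (bipMat S).rank * (-η) ^ S.card := by
  have weight_eq_one_add (P : Prop) [Decidable P] :
      (if P then 1 + η else 1 - η) = 1 + -η * if P then -1 else 1 := by
    split_ifs <;> ring
  simp_rw [pow_card_filter_mul_pow_card_sub, weight_eq_one_add, prod_one_add, prod_mul_distrib,
    prod_const]
  rw [sum_comm]
  simp_rw [← mul_sum, sum_labellings_prod_sign_eq, mul_sum]
  exact sum_congr rfl fun S _ => by ring
end

section
/- For any graph G on n vertices, linear-width(G) ≤ (tw(G)+1)·(⌊log₂ n⌋ + 1), where tw(G) is the tree-width of G. -/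
/-!
Give every vertex a home bag containing it and let `c` be a node of the tree such that every
component of `T - c` contains the home bags of at most half of the `n` vertices. Since every edge
lies in a bag and the bags containing a vertex form a subtree, the vertices outside the bag of `c`
fall into pieces of at most `n / 2` vertices with no edges between different pieces. Path
decompositions of the pieces, obtained recursively, are laid out one after another, and the at
most `k + 1` vertices of the bag of `c` are added to every bag. After `⌊log₂ n⌋` halvings the
pieces have at most one vertex, so the bags have at most `(k + 1) (⌊log₂ n⌋ + 1)` vertices.
Ordering the edges by a bag containing both endpoints turns a path decomposition into an edge
ordering whose cuts lie inside bags.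
-/

/-- `G` has linear-width at most `ℓ`: there is a linear ordering of the edges of `G` such
that for every `i`, at most `ℓ` vertices are incident both to an edge appearing before
position `i` and to an edge at position `i` or later. -/
def LinearWidthLE {V : Type*} [Fintype V] (G : SimpleGraph V) (ℓ : ℕ) : Prop :=
  ∃ (m : ℕ) (e : Fin m ≃ G.edgeSet), ∀ i : Fin m,
    Nat.card {v : V // (∃ j, j < i ∧ v ∈ (e j : Sym2 V)) ∧ ∃ j, i ≤ j ∧ v ∈ (e j : Sym2 V)}
      ≤ ℓ

open Finset

theorem Fintype.exists_equiv_fin_monotone {α β : Type*} [Fintype α] [LinearOrder β] (f : α → β) :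
    ∃ e : Fin (Fintype.card α) ≃ α, Monotone (f ∘ e) :=
  let g := (Fintype.equivFin α).symm
  ⟨(Tuple.sort (f ∘ g)).trans g, Tuple.monotone_sort (f ∘ g)⟩

namespace SimpleGraph

section Centroid

variable {ι : Type*} {T : SimpleGraph ι}

/-- `a` and `b` lie in the same component of `T - c`. -/
def ReachableAvoiding (T : SimpleGraph ι) (c a b : ι) : Prop :=
  ∃ p : T.Walk a b, c ∉ p.support

namespace ReachableAvoiding

variable {a b d c : ι}

theorem refl (h : a ≠ c) : T.ReachableAvoiding c a a :=
  ⟨.nil, by simpa [eq_comm] using h⟩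

theorem symm (h : T.ReachableAvoiding c a b) : T.ReachableAvoiding c b a :=
  let ⟨p, hp⟩ := h
  ⟨p.reverse, by simpa using hp⟩

theorem trans (h₁ : T.ReachableAvoiding c a b) (h₂ : T.ReachableAvoiding c b d) :
    T.ReachableAvoiding c a d :=
  let ⟨p, hp⟩ := h₁
  let ⟨q, hq⟩ := h₂
  ⟨p.append q, by simp [Walk.mem_support_append_iff, hp, hq]⟩

theorem left_ne (h : T.ReachableAvoiding c a b) : a ≠ c := by
  rintro rfl
  obtain ⟨p, hp⟩ := h
  exact hp p.start_mem_support

end ReachableAvoiding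

/-- Otherwise the path from `c` to `b` inside a path from `r` to `b` avoiding `d` and the path
through `d` would be two different paths from `c` to `b`. -/
theorem IsAcyclic.not_reachableAvoiding_of_adj (hT : T.IsAcyclic) {r b c d : ι}
    (hcd : T.Adj c d) (hdb : T.ReachableAvoiding c d b) (hrb : ¬T.ReachableAvoiding c r b) :
    ¬T.ReachableAvoiding d r b := by
  classical
  rintro ⟨w, hw⟩
  have hcw : c ∈ w.bypass.support := by
    by_contra hc
    exact hrb ⟨w.bypass, hc⟩
  obtain ⟨u, hu⟩ := hdb
  have hcons : (Walk.cons hcd u.bypass).IsPath := (Walk.cons_isPath_iff _ _).2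
    ⟨u.bypass_isPath, fun h => hu (u.support_bypass_subset_support h)⟩
  have hsame : w.bypass.dropUntil c hcw = Walk.cons hcd u.bypass :=
    congrArg Subtype.val <| (hT.subsingleton_path c b).elim
      ⟨_, w.bypass_isPath.dropUntil hcw⟩ ⟨_, hcons⟩
  have hd : d ∈ (w.bypass.dropUntil c hcw).support := by
    rw [hsame, Walk.support_cons]
    exact List.mem_cons_of_mem _ (Walk.start_mem_support _)
  exact hw (w.support_bypass_subset_support (w.bypass.support_dropUntil_subset_support hcw hd))

theorem Connected.reachableAvoiding_of_dist_lt (hT : T.Connected) {r c d : ι}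
    (h : T.dist r d < T.dist r c) : T.ReachableAvoiding c r d := by
  classical
  obtain ⟨p, hp⟩ := hT.exists_walk_length_eq_dist r d
  refine ⟨p, fun hc => ?_⟩
  have := dist_le (p.takeUntil c hc)
  have := p.length_takeUntil_le_length hc
  omega

open Classical in
/-- Weighted centroid: some node `c` of a tree splits off no component carrying more than half
of the weight, where `x ∈ s` puts unit weight on the node `f x`. -/
theorem IsTree.exists_forall_card_reachableAvoiding_le [Fintype ι] (hT : T.IsTree) {α : Type*}
    (s : Finset α) (f : α → ι) :
    ∃ c, ∀ a, #{x ∈ s | T.ReachableAvoiding c a (f x)} ≤ #s / 2 := by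
  classical
  obtain ⟨r⟩ := hT.connected.nonempty
  by_cases hs : #s ≤ #s / 2
  · exact ⟨r, fun a => (card_filter_le _ _).trans hs⟩
  -- the weight of the subtree hanging from `t` when `T` is rooted at `r`
  let weight : ι → ℕ := fun t => #{x ∈ s | ¬T.ReachableAvoiding t r (f x)}
  have hr : weight r = #s := by
    refine congrArg card (filter_true_of_mem fun x _ => ?_)
    exact fun h => h.left_ne rfl
  obtain ⟨c, hc, hcmax⟩ := exists_max_image {t | #s / 2 < weight t} (T.dist r)
    ⟨r, by simp only [mem_filter, mem_univ, true_and, hr]; omega⟩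
  -- `c` is a node farthest from `r` among those whose subtree carries more than half the weight
  replace hc : #s / 2 < #{x ∈ s | ¬T.ReachableAvoiding c r (f x)} := (mem_filter.1 hc).2
  refine ⟨c, fun a => ?_⟩
  by_cases hra : T.ReachableAvoiding c r a
  · have hsplit :=
      card_filter_add_card_filter_not (s := s) (p := fun x => T.ReachableAvoiding c r (f x))
    calc #{x ∈ s | T.ReachableAvoiding c a (f x)}
        ≤ #{x ∈ s | T.ReachableAvoiding c r (f x)} :=
          card_le_card (monotone_filter_right _ fun x _ h => hra.trans h)
      _ ≤ #s / 2 := by omega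
  rcases eq_or_ne a c with rfl | hac
  · rw [filter_false_of_mem fun x _ h => h.left_ne rfl, card_empty]
    exact Nat.zero_le _
  obtain ⟨p⟩ := hT.connected.preconnected c a
  obtain ⟨d, hcd, q, hpq⟩ := Walk.exists_eq_cons_of_ne hac.symm p.bypass
  have hda : T.ReachableAvoiding c d a :=
    ⟨q, ((Walk.cons_isPath_iff hcd q).1 (hpq ▸ p.bypass_isPath)).2⟩
  have hdeeper : T.dist r c < T.dist r d := by
    have := hT.dist_eq_dist_add_one_of_adj r hcd
    have : ¬T.dist r d < T.dist r c := fun h =>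
      hra ((hT.connected.reachableAvoiding_of_dist_lt h).trans hda)
    omega
  have hd : weight d ≤ #s / 2 := by
    by_contra! h
    have := hcmax d (by simpa using h)
    omega
  calc #{x ∈ s | T.ReachableAvoiding c a (f x)} ≤ weight d :=
        card_le_card <| monotone_filter_right _ fun x _ hx =>
          hT.isAcyclic.not_reachableAvoiding_of_adj hcd (hda.trans hx) fun h =>
            hra (h.trans hx.symm)
    _ ≤ #s / 2 := hd

end Centroid

section IntervalModel

variable {V : Type*} {G : SimpleGraph V}

/-- Vertex `v` gets the interval `[lo v, hi v]` of positions; the bags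
`{v ∈ A | lo v ≤ t ≤ hi v}` form a path decomposition of `G` on `A` with bags of size at most `w`.
Since adjacency is symmetric, `lo_le_hi_of_adj` says that adjacent vertices have intersecting
intervals. -/
structure IsIntervalModel (G : SimpleGraph V) (A : Finset V) (w : ℕ) (lo hi : V → ℕ) : Prop where
  lo_le_hi : ∀ v ∈ A, lo v ≤ hi v
  lo_le_hi_of_adj : ∀ u ∈ A, ∀ v ∈ A, G.Adj u v → lo u ≤ hi v
  card_le : ∀ t, #{v ∈ A | lo v ≤ t ∧ t ≤ hi v} ≤ w

theorem isIntervalModel_zero (G : SimpleGraph V) (A : Finset V) :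
    G.IsIntervalModel A #A 0 0 where
  lo_le_hi _ _ := le_rfl
  lo_le_hi_of_adj _ _ _ _ _ := le_rfl
  card_le _ := card_filter_le _ _

namespace IsIntervalModel

variable {A A₁ A₂ : Finset V} {w w' : ℕ} {lo hi lo₁ hi₁ lo₂ hi₂ : V → ℕ}

theorem mono (h : G.IsIntervalModel A w lo hi) {A' : Finset V} (hA : A' ⊆ A) (hw : w ≤ w') :
    G.IsIntervalModel A' w' lo hi where
  lo_le_hi v hv := h.lo_le_hi v (hA hv)
  lo_le_hi_of_adj u hu v hv := h.lo_le_hi_of_adj u (hA hu) v (hA hv)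
  card_le t := ((card_le_card (filter_subset_filter _ hA)).trans (h.card_le t)).trans hw

/-- Models of two mutually non-adjacent vertex sets can be laid out one after the other. -/
theorem exists_union [DecidableEq V] (h₁ : G.IsIntervalModel A₁ w lo₁ hi₁)
    (h₂ : G.IsIntervalModel A₂ w lo₂ hi₂) (hnadj : ∀ u ∈ A₁, ∀ v ∈ A₂, ¬G.Adj u v) :
    ∃ lo hi, G.IsIntervalModel (A₁ ∪ A₂) w lo hi := by
  set M := A₁.sup hi₁ + 1
  have hM : ∀ v ∈ A₁, hi₁ v < M := fun v hv => Nat.lt_succ_of_le (le_sup hv)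
  refine ⟨fun v => if v ∈ A₁ then lo₁ v else M + lo₂ v,
    fun v => if v ∈ A₁ then hi₁ v else M + hi₂ v,
    ⟨fun v hv => ?_, fun u hu v hv huv => ?_, fun t => ?_⟩⟩
  · by_cases hv₁ : v ∈ A₁
    · simpa [hv₁] using h₁.lo_le_hi v hv₁
    · have hv₂ : v ∈ A₂ := by simpa [hv₁] using hv
      simpa [hv₁] using h₂.lo_le_hi v hv₂
  · by_cases hu₁ : u ∈ A₁ <;> by_cases hv₁ : v ∈ A₁
    · simpa [hu₁, hv₁] using h₁.lo_le_hi_of_adj u hu₁ v hv₁ huv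
    · exact absurd huv (hnadj u hu₁ v (by simpa [hv₁] using hv))
    · exact absurd huv.symm (hnadj v hv₁ u (by simpa [hu₁] using hu))
    · have hu₂ : u ∈ A₂ := by simpa [hu₁] using hu
      have hv₂ : v ∈ A₂ := by simpa [hv₁] using hv
      simpa [hu₁, hv₁] using h₂.lo_le_hi_of_adj u hu₂ v hv₂ huv
  · rcases lt_or_ge t M with ht | ht
    · refine (card_le_card fun v hv => ?_).trans (h₁.card_le t)
      rw [mem_filter] at hv ⊢
      by_cases hv₁ : v ∈ A₁
      · simpa [hv₁] using hv.2
      · simp only [hv₁, if_false] at hv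
        omega
    · refine (card_le_card fun v hv => ?_).trans (h₂.card_le (t - M))
      rw [mem_filter] at hv ⊢
      by_cases hv₁ : v ∈ A₁
      · simp only [hv₁, if_true] at hv
        have := hM v hv₁
        omega
      · simp only [hv₁, if_false, mem_union, false_or] at hv
        exact ⟨hv.1, by omega, by omega⟩

/-- Adding a set `B` of vertices whose intervals span all positions costs `#B` in width. -/
theorem exists_union_add_card [DecidableEq V] (h : G.IsIntervalModel A w lo hi) (B : Finset V) :
    ∃ lo' hi', G.IsIntervalModel (A ∪ B) (w + #B) lo' hi' := by
  set N := A.sup hi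
  refine ⟨fun v => if v ∈ B then 0 else lo v, fun v => if v ∈ B then N else hi v,
    ⟨fun v hv => ?_, fun u hu v hv huv => ?_, fun t => ?_⟩⟩
  · by_cases hvB : v ∈ B
    · simp [hvB]
    · simpa [hvB] using h.lo_le_hi v (by simpa [hvB] using hv)
  · by_cases huB : u ∈ B
    · simp [huB]
    have huA : u ∈ A := by simpa [huB] using hu
    by_cases hvB : v ∈ B
    · simpa [huB, hvB] using (h.lo_le_hi u huA).trans (le_sup huA)
    · simpa [huB, hvB] using h.lo_le_hi_of_adj u huA v (by simpa [hvB] using hv) huv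
  · calc #{v ∈ A ∪ B | _} ≤ #({v ∈ A | lo v ≤ t ∧ t ≤ hi v} ∪ B) :=
          card_le_card fun v hv => by
            by_cases hvB : v ∈ B <;> simp_all
      _ ≤ w + #B := (card_union_le _ _).trans (Nat.add_le_add_right (h.card_le t) _)

end IsIntervalModel

theorem exists_isIntervalModel_of_pieces {κ : Type*} [DecidableEq V] [DecidableEq κ]
    {A : Finset V} {w : ℕ} (piece : V → κ) (hadj : ∀ u ∈ A, ∀ v ∈ A, G.Adj u v → piece u = piece v)
    (h : ∀ i, ∃ lo hi, G.IsIntervalModel {v ∈ A | piece v = i} w lo hi) :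
    ∃ lo hi, G.IsIntervalModel A w lo hi := by
  suffices ∀ S : Finset κ, ∃ lo hi, G.IsIntervalModel {v ∈ A | piece v ∈ S} w lo hi by
    simpa only [filter_true_of_mem fun v hv => mem_image_of_mem piece hv] using this (A.image piece)
  intro S
  induction S using Finset.induction_on with
  | empty => exact ⟨0, 0, (isIntervalModel_zero G ∅).mono (by simp) (Nat.zero_le _)⟩
  | insert i S hi ih =>
    obtain ⟨lo₁, hi₁, h₁⟩ := h i
    obtain ⟨lo₂, hi₂, h₂⟩ := ih
    have hsplit : {v ∈ A | piece v ∈ insert i S} =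
        {v ∈ A | piece v = i} ∪ {v ∈ A | piece v ∈ S} := by
      ext v; simp [and_or_left]
    rw [hsplit]
    refine h₁.exists_union h₂ fun u hu v hv huv => hi ?_
    simp only [mem_filter] at hu hv
    exact hu.2 ▸ hadj u hu.1 v hv.1 huv ▸ hv.2

/-- Order the edges by a position common to the intervals of their endpoints: a vertex seen both
before and after the `i`-th edge has an interval containing that edge's position. -/
theorem IsIntervalModel.linearWidthLE [Fintype V] {A : Finset V} {ℓ : ℕ} {lo hi : V → ℕ}
    (h : G.IsIntervalModel A ℓ lo hi) (hA : ∀ u v, G.Adj u v → u ∈ A) : LinearWidthLE G ℓ := by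
  classical
  have hpos : ∀ e : G.edgeSet, ∃ t, ∀ x ∈ (e : Sym2 V), x ∈ A ∧ lo x ≤ t ∧ t ≤ hi x := by
    rintro ⟨e, he⟩
    induction e using Sym2.ind with
    | h u v =>
      have huA := hA u v he
      have hvA := hA v u he.symm
      have := h.lo_le_hi u huA
      have := h.lo_le_hi v hvA
      have := h.lo_le_hi_of_adj u huA v hvA he
      have := h.lo_le_hi_of_adj v hvA u huA he.symm
      refine ⟨max (lo u) (lo v), fun x hx => ?_⟩
      rcases Sym2.mem_iff.1 hx with rfl | rfl
      · exact ⟨huA, by omega⟩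
      · exact ⟨hvA, by omega⟩
  choose pos hpos using hpos
  obtain ⟨e, he⟩ := Fintype.exists_equiv_fin_monotone pos
  refine ⟨_, e, fun i => ?_⟩
  rw [Nat.card_eq_fintype_card, Fintype.card_subtype]
  refine (card_le_card fun v hv => ?_).trans (h.card_le (pos (e i)))
  obtain ⟨⟨j, hji, hvj⟩, ⟨j', hij', hvj'⟩⟩ := (mem_filter.1 hv).2
  have hle₁ : pos (e j) ≤ pos (e i) := he hji.le
  have hle₂ : pos (e i) ≤ pos (e j') := he hij'
  obtain ⟨hvA, hlo, -⟩ := hpos (e j) v hvj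
  obtain ⟨-, -, hhi⟩ := hpos (e j') v hvj'
  exact mem_filter.2 ⟨hvA, hlo.trans hle₁, hle₂.trans hhi⟩

end IntervalModel

section TreeDecomposition

variable {V ι : Type*} {G : SimpleGraph V} {T : SimpleGraph ι} {bags : ι → Finset V}

structure IsTreeDecomposition (G : SimpleGraph V) (T : SimpleGraph ι) (bags : ι → Finset V) :
    Prop where
  isTree : T.IsTree
  exists_mem_bag_of_adj : ∀ v w : V, G.Adj v w → ∃ h : ι, v ∈ bags h ∧ w ∈ bags h
  mem_bag_of_mem_support : ∀ v : V, ∀ t₁ t₃ : ι, v ∈ bags t₁ → v ∈ bags t₃ →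
    ∀ p : T.Walk t₁ t₃, p.IsPath → ∀ t₂ ∈ p.support, v ∈ bags t₂

namespace IsTreeDecomposition

theorem reachableAvoiding_of_mem (hD : G.IsTreeDecomposition T bags) {v : V} {c t₁ t₂ : ι}
    (h₁ : v ∈ bags t₁) (h₂ : v ∈ bags t₂) (hc : v ∉ bags c) : T.ReachableAvoiding c t₁ t₂ := by
  classical
  obtain ⟨p⟩ := hD.isTree.connected.preconnected t₁ t₂
  exact ⟨p.bypass, fun hcp => hc (hD.mem_bag_of_mem_support v t₁ t₂ h₁ h₂ _ p.bypass_isPath c hcp)⟩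

open Classical in
/-- `c` is a centroid for the weights put on the home bags, and a piece is labelled by the component
of `T - c` containing the home bag of its vertices. -/
theorem exists_separator [Fintype ι] [DecidableEq V] (hD : G.IsTreeDecomposition T bags)
    (A : Finset V) (home : V → ι) (hhome : ∀ v ∈ A, v ∈ bags (home v)) :
    ∃ (c : ι) (piece : V → Set ι),
      (∀ u ∈ A \ bags c, ∀ v ∈ A \ bags c, G.Adj u v → piece u = piece v) ∧
      ∀ S, #{v ∈ A \ bags c | piece v = S} ≤ #A / 2 := by
  obtain ⟨c, hc⟩ := hD.isTree.exists_forall_card_reachableAvoiding_le A home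
  let piece : V → Set ι := fun v => {t | T.ReachableAvoiding c (home v) t}
  refine ⟨c, piece, fun u hu v hv huv => ?_, fun S => ?_⟩
  · rw [mem_sdiff] at hu hv
    obtain ⟨t, hut, hvt⟩ := hD.exists_mem_bag_of_adj u v huv
    have huv : T.ReachableAvoiding c (home u) (home v) :=
      (hD.reachableAvoiding_of_mem (hhome u hu.1) hut hu.2).trans
        (hD.reachableAvoiding_of_mem hvt (hhome v hv.1) hv.2)
    ext t
    exact ⟨huv.symm.trans, huv.trans⟩
  · rcases (filter (piece · = S) (A \ bags c)).eq_empty_or_nonempty with hempty | ⟨v₀, hv₀⟩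
    · simp [hempty]
    refine (card_le_card fun v hv => ?_).trans (hc (home v₀))
    simp only [mem_filter, mem_sdiff] at hv hv₀ ⊢
    have hvv : home v ∈ piece v :=
      ReachableAvoiding.refl fun h => hv.1.2 (h ▸ hhome v hv.1.1)
    rw [hv.2, ← hv₀.2] at hvv
    exact ⟨hv.1.1, hvv⟩

theorem exists_isIntervalModel [Fintype ι] (hD : G.IsTreeDecomposition T bags)
    {k : ℕ} (hwidth : ∀ t, #(bags t) ≤ k + 1) (home : V → ι) (n : ℕ) (A : Finset V)
    (hA : #A ≤ n) (hhome : ∀ v ∈ A, v ∈ bags (home v)) :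
    ∃ lo hi, G.IsIntervalModel A ((k + 1) * (Nat.log 2 n + 1)) lo hi := by
  classical
  induction n using Nat.strong_induction_on generalizing A with
  | _ n ih =>
  rcases lt_or_ge n 2 with hn | hn
  · exact ⟨0, 0, (isIntervalModel_zero G A).mono subset_rfl (by nlinarith)⟩
  obtain ⟨c, piece, hadj, hcard⟩ := hD.exists_separator A home hhome
  have hpieces : ∀ S, ∃ lo hi, G.IsIntervalModel {v ∈ A \ bags c | piece v = S}
      ((k + 1) * (Nat.log 2 (n / 2) + 1)) lo hi := fun S =>
    ih (n / 2) (by omega) _ ((hcard S).trans (Nat.div_le_div_right hA))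
      fun v hv => hhome v (mem_sdiff.1 (mem_filter.1 hv).1).1
  obtain ⟨lo, hi, h⟩ := exists_isIntervalModel_of_pieces piece hadj hpieces
  obtain ⟨lo', hi', h'⟩ := h.exists_union_add_card (bags c)
  have hlog : Nat.log 2 (n / 2) + 1 = Nat.log 2 n := by
    have := Nat.log_pos one_lt_two hn
    rw [Nat.log_div_base]
    omega
  refine ⟨lo', hi', h'.mono (sdiff_union_self_eq_union (s := A) ▸ subset_union_left) ?_⟩
  calc (k + 1) * (Nat.log 2 (n / 2) + 1) + #(bags c) ≤ (k + 1) * Nat.log 2 n + (k + 1) := by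
        rw [hlog]; exact Nat.add_le_add_left (hwidth c) _
    _ = (k + 1) * (Nat.log 2 n + 1) := by ring

end IsTreeDecomposition

end TreeDecomposition

end SimpleGraph

/-- For any graph `G` on `n` vertices, if `G` has a tree decomposition of width at most `k`
(bags of size at most `k+1`), then `linear-width(G) ≤ (k+1)·(⌊log₂ n⌋ + 1)`.  In
particular `linear-width(G) ≤ (tw(G)+1)·(⌊log₂ n⌋ + 1)`. -/
theorem linearWidth_le_treewidth {V ι : Type*} [Fintype V] [Fintype ι]
    (G : SimpleGraph V) (T : SimpleGraph ι) (hT : T.IsTree) (bags : ι → Finset V) (k : ℕ)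
    (hcover : ∀ v w : V, G.Adj v w → ∃ h : ι, v ∈ bags h ∧ w ∈ bags h)
    (hsubtree : ∀ v : V, ∀ t₁ t₃ : ι, v ∈ bags t₁ → v ∈ bags t₃ →
      ∀ p : T.Walk t₁ t₃, p.IsPath → ∀ t₂ ∈ p.support, v ∈ bags t₂)
    (hwidth : ∀ h : ι, (bags h).card ≤ k + 1) :
    LinearWidthLE G ((k + 1) * (Nat.log 2 (Fintype.card V) + 1)) := by
  classical
  have hD : SimpleGraph.IsTreeDecomposition G T bags := ⟨hT, hcover, hsubtree⟩
  have : Nonempty ι := hT.connected.nonempty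
  let home : V → ι := fun v => Classical.epsilon (v ∈ bags ·)
  obtain ⟨lo, hi, h⟩ := hD.exists_isIntervalModel hwidth home _ (univ.biUnion bags)
    (card_le_univ _) fun v hv => Classical.epsilon_spec (by simpa using hv)
  refine h.linearWidthLE fun u v huv => ?_
  obtain ⟨t, hut, -⟩ := hcover u v huv
  exact mem_biUnion.2 ⟨t, mem_univ t, hut⟩
end

section
/- Let G=(V,E) be a graph, fix an ordering e_1,…,e_m of E of linear-width ℓ, and for I, F ⊆ E define the canonical path from I to F by flipping the edges of I ⊕ F in the order of σ. For any H on this canonical path, letting C = I ⊕ F ⊕ H and κ(X) denote the number of connected components of (V, X), we have |κ(I) + κ(F) − κ(H) − κ(C)| ≤ ℓ. -/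
/-!
Write `κ(X) = |V| - dim U(X)`, where `U(X) ⊆ ℝ^V` is spanned by the vectors `χ_u - χ_v` of the
edges `uv ∈ X`: its orthogonal complement is the kernel of the Laplacian of `(V, X)`, whose
dimension is the number of components. Cutting the ordering at `q` splits `I = a ∪ c` and
`F = b ∪ d` into early and late edges, so that `H = b ∪ c` and `C = a ∪ d`. By
`dim (U + U') = dim U + dim U' - dim (U ∩ U')` the quantity to bound becomes
`dim (U_a ∩ U_c) + dim (U_b ∩ U_d) - dim (U_a ∩ U_d) - dim (U_b ∩ U_c)`. The early spans consist
of vectors supported on the vertices `L` of early edges, the late ones on the vertices `R` of late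
edges, so each intersection lies in the space `T` of vectors supported on `L ∩ R`, and a
modularity argument bounds the alternating sum by `dim T = |L ∩ R| ≤ ℓ`.
-/

/-- The number of connected components (including isolated vertices) of the spanning
subgraph of `V` whose edges are the edges `e i` for `i ∈ X`. -/
noncomputable def kappa {V : Type*} [Fintype V] {m : ℕ} (e : Fin m → Sym2 V)
    (X : Finset (Fin m)) : ℕ :=
  Nat.card (SimpleGraph.fromEdgeSet {s : Sym2 V | ∃ i ∈ X, e i = s}).ConnectedComponent

open Module

namespace Submodule

variable {K M : Type*} [DivisionRing K] [AddCommGroup M] [Module K M] [FiniteDimensional K M]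

theorem finrank_add_finrank_inf_le_of_le {X Y : Submodule K M} (h : X ≤ Y) (Z : Submodule K M) :
    finrank K X + finrank K ↥(Y ⊓ Z) ≤ finrank K Y + finrank K ↥(X ⊓ Z) := by
  have hsup : X ⊔ Y ⊓ Z ≤ Y := sup_le h inf_le_left
  have hinf : X ⊓ (Y ⊓ Z) = X ⊓ Z := by rw [← inf_assoc, inf_eq_left.mpr h]
  have := finrank_sup_add_finrank_inf_eq X (Y ⊓ Z)
  have := finrank_mono hsup
  rw [hinf] at *
  omega

theorem finrank_inf_add_finrank_inf_le {A B C D W W' : Submodule K M}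
    (hA : A ≤ W) (hB : B ≤ W) (hC : C ≤ W') (hD : D ≤ W') :
    finrank K ↥(A ⊓ C) + finrank K ↥(B ⊓ D) ≤
      finrank K ↥(A ⊓ D) + finrank K ↥(B ⊓ C) + finrank K ↥(W ⊓ W') := by
  set T := W ⊓ W'
  have hAC : A ⊓ C ≤ A ⊓ T :=
    le_inf inf_le_left (le_inf (inf_le_left.trans hA) (inf_le_right.trans hC))
  have hBD : B ⊓ D ≤ B ⊓ T :=
    le_inf inf_le_left (le_inf (inf_le_left.trans hB) (inf_le_right.trans hD))
  -- `dim (A ⊓ C) - dim (B ⊓ C) ≤ dim (A ⊓ T) - dim (A ⊓ B ⊓ T)`, symmetrically for `B ⊓ D`, and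
  -- `dim (A ⊓ T) + dim (B ⊓ T) - 2 dim (A ⊓ B ⊓ T) ≤ dim T`
  have hA_step := finrank_add_finrank_inf_le_of_le hAC (B ⊓ T)
  have hB_step := finrank_add_finrank_inf_le_of_le hBD (A ⊓ T)
  have hBC : finrank K ↥(A ⊓ C ⊓ (B ⊓ T)) ≤ finrank K ↥(B ⊓ C) :=
    finrank_mono (le_inf (inf_le_right.trans inf_le_left) (inf_le_left.trans inf_le_right))
  have hAD : finrank K ↥(B ⊓ D ⊓ (A ⊓ T)) ≤ finrank K ↥(A ⊓ D) :=
    finrank_mono (le_inf (inf_le_right.trans inf_le_left) (inf_le_left.trans inf_le_right))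
  have hmod := finrank_sup_add_finrank_inf_eq (A ⊓ T) (B ⊓ T)
  have hT : finrank K ↥(A ⊓ T ⊔ B ⊓ T) ≤ finrank K T :=
    finrank_mono (sup_le inf_le_right inf_le_right)
  rw [inf_comm (B ⊓ T)] at hB_step
  omega

theorem abs_finrank_sup_exchange_le {A B C D W W' : Submodule K M}
    (hA : A ≤ W) (hB : B ≤ W) (hC : C ≤ W') (hD : D ≤ W') :
    |(finrank K ↥(A ⊔ D) : ℤ) + finrank K ↥(B ⊔ C) - finrank K ↥(A ⊔ C) - finrank K ↥(B ⊔ D)|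
      ≤ finrank K ↥(W ⊓ W') := by
  have := finrank_inf_add_finrank_inf_le hA hB hC hD
  have := finrank_inf_add_finrank_inf_le hB hA hC hD
  have := finrank_sup_add_finrank_inf_eq A C
  have := finrank_sup_add_finrank_inf_eq A D
  have := finrank_sup_add_finrank_inf_eq B C
  have := finrank_sup_add_finrank_inf_eq B D
  rw [abs_le]
  constructor <;> omega

theorem finrank_pi_compl_bot_le {ι : Type*} [Fintype ι] (S : Set ι) :
    finrank K ↥(pi Sᶜ fun _ => (⊥ : Submodule K K)) ≤ Nat.card S := by
  classical
  let restrict := (LinearMap.funLeft K K ((↑) : S → ι)).comp (pi Sᶜ fun _ => ⊥).subtype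
  have hinj : Function.Injective restrict := by
    rw [← LinearMap.ker_eq_bot, LinearMap.ker_eq_bot']
    rintro ⟨x, hx⟩ h0
    simp only [mem_pi, mem_bot] at hx
    ext v
    by_cases hv : v ∈ S
    · exact congrFun h0 ⟨v, hv⟩
    · exact hx v hv
  simpa [Nat.card_eq_fintype_card] using LinearMap.finrank_le_finrank_of_injective hinj

theorem pi_compl_bot_inf_le {ι : Type*} (L R : Set ι) :
    (pi Lᶜ fun _ => (⊥ : Submodule K K)) ⊓ pi Rᶜ (fun _ => ⊥) ≤ pi (L ∩ R)ᶜ fun _ => ⊥ := by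
  rintro x ⟨hL, hR⟩ v hv
  by_cases hvL : v ∈ L
  · exact hR v fun hvR => hv ⟨hvL, hvR⟩
  · exact hL v hvL

end Submodule

namespace SimpleGraph

variable {V : Type*} [DecidableEq V]

def incidenceSpan (G : SimpleGraph V) : Submodule ℝ (V → ℝ) :=
  Submodule.span ℝ {x | ∃ u v, G.Adj u v ∧ x = Pi.single u 1 - Pi.single v 1}

theorem incidenceSpan_sup (G G' : SimpleGraph V) :
    (G ⊔ G').incidenceSpan = G.incidenceSpan ⊔ G'.incidenceSpan := by
  rw [incidenceSpan, incidenceSpan, incidenceSpan, ← Submodule.span_union]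
  congr 1
  ext x
  simp only [sup_adj, Set.mem_union, Set.mem_ofPred_eq]
  grind

theorem incidenceSpan_le_pi {G : SimpleGraph V} {S : Set V} (h : ∀ u v, G.Adj u v → u ∈ S) :
    G.incidenceSpan ≤ Submodule.pi Sᶜ fun _ => ⊥ := by
  rw [incidenceSpan, Submodule.span_le]
  rintro _ ⟨u, v, huv, rfl⟩ w hw
  have hu : w ≠ u := by rintro rfl; exact hw (h w v huv)
  have hv : w ≠ v := by rintro rfl; exact hw (h w u huv.symm)
  simp [hu, hv]

theorem card_connectedComponent_add_finrank_incidenceSpan [Fintype V] (G : SimpleGraph V) :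
    Nat.card G.ConnectedComponent + finrank ℝ G.incidenceSpan = Fintype.card V := by
  classical
  let B : LinearMap.BilinForm ℝ (V → ℝ) := Matrix.toBilin' 1
  have hB : B.Nondegenerate := (Matrix.nondegenerate_of_det_ne_zero (by simp)).toBilin'
  have hBx : ∀ x y, B y x = y ⬝ᵥ x := by simp [B, Matrix.toBilin'_apply']
  have horth : B.orthogonal G.incidenceSpan = LinearMap.ker (G.lapMatrix ℝ).toLin' := by
    ext x
    rw [LinearMap.mem_ker, Matrix.toLin'_apply, lapMatrix_mulVec_eq_zero_iff_forall_adj]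
    change G.incidenceSpan ≤ LinearMap.ker (B.flip x) ↔ _
    rw [incidenceSpan, Submodule.span_le]
    constructor
    · intro h u v huv
      simpa [hBx, sub_eq_zero] using h ⟨u, v, huv, rfl⟩
    · rintro h _ ⟨u, v, huv, rfl⟩
      simp [hBx, h u v huv]
  have hle := Submodule.finrank_le G.incidenceSpan
  rw [Module.finrank_fintype_fun_eq_card] at hle
  rw [Nat.card_eq_fintype_card, card_connectedComponent_eq_finrank_ker_toLin'_lapMatrix, ← horth,
    LinearMap.BilinForm.finrank_orthogonal hB, Module.finrank_fintype_fun_eq_card]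
  omega

end SimpleGraph

section IndexedEdges

variable {V : Type*} [Fintype V] [DecidableEq V] {m : ℕ} (e : Fin m → Sym2 V)

noncomputable def edgeSpan (X : Finset (Fin m)) : Submodule ℝ (V → ℝ) :=
  (SimpleGraph.fromEdgeSet (e '' X)).incidenceSpan

theorem kappa_eq_card_sub_finrank_edgeSpan (X : Finset (Fin m)) :
    (kappa e X : ℤ) = Fintype.card V - finrank ℝ (edgeSpan e X) := by
  have h := (SimpleGraph.fromEdgeSet (e '' X)).card_connectedComponent_add_finrank_incidenceSpan
  change (Nat.card (SimpleGraph.fromEdgeSet (e '' X)).ConnectedComponent : ℤ) = _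
  rw [edgeSpan]
  omega

omit [Fintype V] in
theorem edgeSpan_union (X Y : Finset (Fin m)) :
    edgeSpan e (X ∪ Y) = edgeSpan e X ⊔ edgeSpan e Y := by
  rw [edgeSpan, edgeSpan, edgeSpan, Finset.coe_union, Set.image_union,
    SimpleGraph.fromEdgeSet_union, SimpleGraph.incidenceSpan_sup]

omit [Fintype V] in
theorem edgeSpan_le_pi {p : Fin m → Prop} {X : Finset (Fin m)} (hX : ∀ i ∈ X, p i) :
    edgeSpan e X ≤ Submodule.pi {v | ∃ j, p j ∧ v ∈ e j}ᶜ fun _ => ⊥ := by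
  refine SimpleGraph.incidenceSpan_le_pi fun u v huv => ?_
  obtain ⟨⟨i, hi, hei⟩, -⟩ := huv
  exact ⟨i, hX i hi, hei ▸ Sym2.mem_mk_left u v⟩

end IndexedEdges

theorem abs_kappa_exchange_le {V : Type*} [Fintype V] {m : ℕ} (e : Fin m → Sym2 V)
    (p : Fin m → Prop) [DecidablePred p] (I F : Finset (Fin m)) :
    |(kappa e I : ℤ) + kappa e F - kappa e (F.filter p ∪ I.filter (¬p ·))
        - kappa e (I.filter p ∪ F.filter (¬p ·))|
      ≤ Nat.card {v : V // (∃ j, p j ∧ v ∈ e j) ∧ ∃ j, ¬p j ∧ v ∈ e j} := by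
  classical
  set L : Set V := {v | ∃ j, p j ∧ v ∈ e j}
  set R : Set V := {v | ∃ j, ¬p j ∧ v ∈ e j}
  have hL : ∀ X : Finset (Fin m), edgeSpan e (X.filter p) ≤ Submodule.pi Lᶜ fun _ => ⊥ :=
    fun X => edgeSpan_le_pi e fun i hi => (Finset.mem_filter.mp hi).2
  have hR : ∀ X : Finset (Fin m), edgeSpan e (X.filter (¬p ·)) ≤ Submodule.pi Rᶜ fun _ => ⊥ :=
    fun X => edgeSpan_le_pi e fun i hi => (Finset.mem_filter.mp hi).2
  have hLR := (Submodule.finrank_mono (Submodule.pi_compl_bot_inf_le (K := ℝ) L R)).trans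
    (Submodule.finrank_pi_compl_bot_le (L ∩ R))
  have hbound := (Submodule.abs_finrank_sup_exchange_le (hL I) (hL F) (hR I) (hR F)).trans
    (Int.ofNat_le.mpr hLR)
  have hI : kappa e I = kappa e (I.filter p ∪ I.filter (¬p ·)) := by
    rw [Finset.filter_union_filter_not_eq]
  have hF : kappa e F = kappa e (F.filter p ∪ F.filter (¬p ·)) := by
    rw [Finset.filter_union_filter_not_eq]
  rw [hI, hF]
  simp only [kappa_eq_card_sub_finrank_edgeSpan]
  rw [edgeSpan_union, edgeSpan_union, edgeSpan_union, edgeSpan_union]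
  refine le_of_eq_of_le ?_ hbound
  congr 1
  ring

theorem kappa_canonical_path_bound_general {V : Type*} [Fintype V] {m : ℕ}
    (e : Fin m → Sym2 V)
    (ℓ : ℕ)
    (hlw : ∀ i : Fin m,
      Nat.card {v : V // (∃ j, j < i ∧ v ∈ e j) ∧ ∃ j, i ≤ j ∧ v ∈ e j} ≤ ℓ)
    (I F : Finset (Fin m)) (q : ℕ) (H C : Finset (Fin m))
    (hH : H = (F.filter fun j : Fin m => (j : ℕ) < q) ∪ (I.filter fun j : Fin m => ¬(j : ℕ) < q))
    (hC : C = symmDiff (symmDiff I F) H) :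
    |(kappa e I : ℤ) + kappa e F - kappa e H - kappa e C| ≤ ℓ := by
  have hC' : C = (I.filter fun j : Fin m => (j : ℕ) < q) ∪
      (F.filter fun j : Fin m => ¬(j : ℕ) < q) := by
    ext j
    by_cases hj : (j : ℕ) < q <;>
      simp only [hC, hH, Finset.mem_symmDiff, Finset.mem_union, Finset.mem_filter, hj] <;> tauto
  have hboundary : Nat.card {v : V // (∃ j : Fin m, (j : ℕ) < q ∧ v ∈ e j) ∧
      ∃ j : Fin m, ¬(j : ℕ) < q ∧ v ∈ e j} ≤ ℓ := by
    rcases lt_or_ge q m with hq | hq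
    · refine le_of_eq_of_le (Nat.card_congr (Equiv.subtypeEquivRight fun v => ?_)) (hlw ⟨q, hq⟩)
      simp [Fin.lt_def, Fin.le_def]
    · have hlate : ∀ j : Fin m, (j : ℕ) < q := fun j => j.2.trans_le hq
      simp [hlate]
  rw [hH, hC']
  exact (abs_kappa_exchange_le e _ I F).trans (Int.ofNat_le.mpr hboundary)

/-- Let `G = (V, E)` be a graph with an ordering `e₁, …, e_m` of its edges of linear-width
`ℓ`, and for `I, F ⊆ E` consider the canonical path from `I` to `F` flipping the edges of
`I ⊕ F` in order.  For any `H` on this canonical path (i.e. `H = (F ∩ Q) ∪ (I ∩ Qᶜ)` for a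
prefix `Q` of the ordering), with `C = I ⊕ F ⊕ H`,
`|κ(I) + κ(F) − κ(H) − κ(C)| ≤ ℓ`. -/
theorem kappa_canonical_path_bound {V : Type*} [Fintype V] [DecidableEq V] {m : ℕ}
    (e : Fin m → Sym2 V) (hinj : Function.Injective e) (hndiag : ∀ i, ¬(e i).IsDiag)
    (ℓ : ℕ)
    (hlw : ∀ i : Fin m,
      Nat.card {v : V // (∃ j, j < i ∧ v ∈ e j) ∧ ∃ j, i ≤ j ∧ v ∈ e j} ≤ ℓ)
    (I F : Finset (Fin m)) (q : ℕ) (H C : Finset (Fin m))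
    (hH : H = (F.filter fun j : Fin m => (j : ℕ) < q) ∪ (I.filter fun j : Fin m => ¬(j : ℕ) < q))
    (hC : C = symmDiff (symmDiff I F) H) :
    |(kappa e I : ℤ) + kappa e F - kappa e H - kappa e C| ≤ ℓ :=
  kappa_canonical_path_bound_general e ℓ hlw I F q H C hH hC
end
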